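/- Let v, v̂ : [0,1] → ℝ≥0 be integrable, let S* maximize r(S, v) and Ŝ maximize r(S, v̂) over a common family 𝒮 of Borel subsets of [0,1] (e.g. all sets of volume ≤ c). Then r(S*, v) − r(Ŝ, v) ≤ 2‖v − v̂‖₁, where ‖·‖₁ is the L¹ norm on [0,1] and r(S,u) = (∫_S u w dx)/(1 + ∫_S u dx) for a fixed measurable w : [0,1] → [0,1]. -/

import Mathlib

/-!
Write `r(S, u) = (∫_S u w) / (1 + ∫_S u)`. For a fixed set `S` and `ρ = r(S, u₁)`, the fixed-point
identity `ρ (1 + ∫_S u₁) = ∫_S u₁ w` turns `ρ (1 + ∫_S u₂) - ∫_S u₂ w` into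
`∫_S (u₁ - u₂)(w - ρ)`, which is at most `‖u₁ - u₂‖₁` because `w` and `ρ` both lie in `[0, 1]`;
dividing by `1 + ∫_S u₂ ≥ 1` gives `r(S, u₁) - r(S, u₂) ≤ ‖u₁ - u₂‖₁`. Then
`r(S*, v) - r(Ŝ, v) = [r(S*, v) - r(S*, v̂)] + [r(S*, v̂) - r(Ŝ, v̂)] + [r(Ŝ, v̂) - r(Ŝ, v)]`,
where the middle term is `≤ 0` by optimality of `Ŝ` for `v̂`.
-/

open MeasureTheory Set

namespace Assortment

variable {X : Type*} [MeasurableSpace X] {μ : Measure X} {S T : Set X} {w u u₁ u₂ : X → ℝ}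

noncomputable def revenue (μ : Measure X) (w u : X → ℝ) (S : Set X) : ℝ :=
  (∫ x in S, u x * w x ∂μ) / (1 + ∫ x in S, u x ∂μ)

theorem integrableOn_mul_of_mem_Icc (hS : MeasurableSet S)
    (hw : AEStronglyMeasurable w (μ.restrict S)) (hw01 : ∀ x ∈ S, w x ∈ Icc (0 : ℝ) 1)
    (hu : IntegrableOn u S μ) : IntegrableOn (fun x => u x * w x) S μ :=
  hu.mul_bdd hw <| ae_restrict_of_forall_mem hS fun x hx =>
    abs_le.2 ⟨by linarith [(hw01 x hx).1], (hw01 x hx).2⟩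

theorem revenue_mem_Icc (hS : MeasurableSet S)
    (hw : AEStronglyMeasurable w (μ.restrict S)) (hw01 : ∀ x ∈ S, w x ∈ Icc (0 : ℝ) 1)
    (hu : IntegrableOn u S μ) (hu0 : ∀ x ∈ S, 0 ≤ u x) :
    revenue μ w u S ∈ Icc (0 : ℝ) 1 := by
  have hA : 0 ≤ ∫ x in S, u x * w x ∂μ :=
    setIntegral_nonneg hS fun x hx => mul_nonneg (hu0 x hx) (hw01 x hx).1
  have hAB : ∫ x in S, u x * w x ∂μ ≤ ∫ x in S, u x ∂μ :=
    setIntegral_mono_on (integrableOn_mul_of_mem_Icc hS hw hw01 hu) hu hS fun x hx =>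
      mul_le_of_le_one_right (hu0 x hx) (hw01 x hx).2
  have hpos : 0 < 1 + ∫ x in S, u x ∂μ := by linarith
  exact ⟨div_nonneg hA hpos.le, (div_le_one hpos).2 (by linarith)⟩

theorem setIntegral_mul_le_setIntegral_abs {f g : X → ℝ} (hS : MeasurableSet S)
    (hf : IntegrableOn f S μ) (hg : ∀ x ∈ S, |g x| ≤ 1) :
    ∫ x in S, f x * g x ∂μ ≤ ∫ x in S, |f x| ∂μ :=
  calc ∫ x in S, f x * g x ∂μ
      ≤ ‖∫ x in S, f x * g x ∂μ‖ := Real.le_norm_self _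
    _ ≤ ∫ x in S, ‖f x * g x‖ ∂μ := norm_integral_le_integral_norm _
    _ ≤ ∫ x in S, |f x| ∂μ := by
      refine integral_mono_of_nonneg (ae_of_all _ fun _ => norm_nonneg _) hf.abs
        (ae_restrict_of_forall_mem hS fun x hx => ?_)
      simp only [Real.norm_eq_abs, abs_mul]
      exact mul_le_of_le_one_right (abs_nonneg _) (hg x hx)

theorem sub_div_one_add_le {a A B ε : ℝ} (hB : 0 ≤ B) (hε : 0 ≤ ε)
    (h : a * (1 + B) - A ≤ ε) : a - A / (1 + B) ≤ ε := by
  have hpos : 0 < 1 + B := by linarith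
  rw [show a - A / (1 + B) = (a * (1 + B) - A) / (1 + B) by field_simp, div_le_iff₀ hpos]
  nlinarith

theorem revenue_sub_revenue_le (hS : MeasurableSet S)
    (hw : AEStronglyMeasurable w (μ.restrict S)) (hw01 : ∀ x ∈ S, w x ∈ Icc (0 : ℝ) 1)
    (hu₁ : IntegrableOn u₁ S μ) (hu₁0 : ∀ x ∈ S, 0 ≤ u₁ x)
    (hu₂ : IntegrableOn u₂ S μ) (hu₂0 : ∀ x ∈ S, 0 ≤ u₂ x) :
    revenue μ w u₁ S - revenue μ w u₂ S ≤ ∫ x in S, |u₁ x - u₂ x| ∂μ := by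
  set ρ := revenue μ w u₁ S
  have hρ01 : ρ ∈ Icc (0 : ℝ) 1 := revenue_mem_Icc hS hw hw01 hu₁ hu₁0
  have hB₁ : 0 ≤ ∫ x in S, u₁ x ∂μ := setIntegral_nonneg hS hu₁0
  have hfixed : ρ * (1 + ∫ x in S, u₁ x ∂μ) = ∫ x in S, u₁ x * w x ∂μ :=
    div_mul_cancel₀ _ (by linarith)
  have hu₁w := integrableOn_mul_of_mem_Icc hS hw hw01 hu₁
  have hu₂w := integrableOn_mul_of_mem_Icc hS hw hw01 hu₂
  have hsplit : ∫ x in S, (u₁ x - u₂ x) * (w x - ρ) ∂μ =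
      (∫ x in S, u₁ x * w x ∂μ - ∫ x in S, u₂ x * w x ∂μ) -
        ρ * (∫ x in S, u₁ x ∂μ - ∫ x in S, u₂ x ∂μ) := by
    rw [← integral_sub hu₁w hu₂w, ← integral_sub hu₁ hu₂, ← integral_const_mul,
      ← integral_sub]
    · congr 1 with x
      ring
    · exact hu₁w.sub hu₂w
    · exact (hu₁.sub hu₂).const_mul ρ
  have hbound : ∫ x in S, (u₁ x - u₂ x) * (w x - ρ) ∂μ ≤ ∫ x in S, |u₁ x - u₂ x| ∂μ :=
    setIntegral_mul_le_setIntegral_abs hS (hu₁.sub hu₂) fun x hx =>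
      abs_le.2 ⟨by linarith [(hw01 x hx).1, hρ01.2], by linarith [(hw01 x hx).2, hρ01.1]⟩
  refine sub_div_one_add_le (setIntegral_nonneg hS hu₂0)
    (integral_nonneg fun _ => abs_nonneg _) ?_
  linarith

theorem revenue_sub_revenue_le_of_subset (hST : S ⊆ T)
    (hS : MeasurableSet S) (hw : AEStronglyMeasurable w (μ.restrict T))
    (hw01 : ∀ x ∈ T, w x ∈ Icc (0 : ℝ) 1)
    (hu₁ : IntegrableOn u₁ T μ) (hu₁0 : ∀ x, 0 ≤ u₁ x)
    (hu₂ : IntegrableOn u₂ T μ) (hu₂0 : ∀ x, 0 ≤ u₂ x) :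
    revenue μ w u₁ S - revenue μ w u₂ S ≤ ∫ x in T, |u₁ x - u₂ x| ∂μ :=
  (revenue_sub_revenue_le hS (hw.mono_measure (Measure.restrict_mono hST le_rfl))
    (fun x hx => hw01 x (hST hx)) (hu₁.mono_set hST) (fun x _ => hu₁0 x)
    (hu₂.mono_set hST) (fun x _ => hu₂0 x)).trans <|
  setIntegral_mono_set (hu₁.sub hu₂).abs (ae_of_all _ fun _ => abs_nonneg _) hST.eventuallyLE

end Assortment

open Assortment

theorem stmt16_general (c : ℝ) (w v vhat : ℝ → ℝ)
    (hw_meas : Measurable w)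
    (hw_range : ∀ x ∈ Icc (0:ℝ) 1, w x ∈ Icc (0:ℝ) 1)
    (hv_int : IntegrableOn v (Icc 0 1)) (hv_nonneg : ∀ x, 0 ≤ v x)
    (hvhat_int : IntegrableOn vhat (Icc 0 1)) (hvhat_nonneg : ∀ x, 0 ≤ vhat x)
    (Sstar Shat : Set ℝ)
    (hSstar_meas : MeasurableSet Sstar) (hSstar_sub : Sstar ⊆ Icc 0 1)
    (hSstar_vol : (volume Sstar).toReal ≤ c)
    (hShat_meas : MeasurableSet Shat) (hShat_sub : Shat ⊆ Icc 0 1)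
    (hShat_max : ∀ S : Set ℝ, MeasurableSet S → S ⊆ Icc 0 1 → (volume S).toReal ≤ c →
      (∫ x in S, vhat x * w x) / (1 + ∫ x in S, vhat x) ≤
        (∫ x in Shat, vhat x * w x) / (1 + ∫ x in Shat, vhat x)) :
    (∫ x in Sstar, v x * w x) / (1 + ∫ x in Sstar, v x) -
        (∫ x in Shat, v x * w x) / (1 + ∫ x in Shat, v x) ≤
      2 * ∫ x in Icc (0:ℝ) 1, |v x - vhat x| := by
  have hw := hw_meas.aestronglyMeasurable (μ := volume.restrict (Icc 0 1))
  have hstar : revenue volume w v Sstar - revenue volume w vhat Sstar ≤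
      ∫ x in Icc (0:ℝ) 1, |v x - vhat x| :=
    revenue_sub_revenue_le_of_subset hSstar_sub hSstar_meas hw hw_range
      hv_int hv_nonneg hvhat_int hvhat_nonneg
  have hhat : revenue volume w vhat Shat - revenue volume w v Shat ≤
      ∫ x in Icc (0:ℝ) 1, |v x - vhat x| := by
    simpa only [abs_sub_comm] using revenue_sub_revenue_le_of_subset
      hShat_sub hShat_meas hw hw_range hvhat_int hvhat_nonneg hv_int hv_nonneg
  have hopt := hShat_max Sstar hSstar_meas hSstar_sub hSstar_vol
  unfold revenue at hstar hhat
  linarith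

theorem stmt16 (c : ℝ) (hc : c ∈ Ioc (0:ℝ) 1) (w v vhat : ℝ → ℝ)
    (hw_meas : Measurable w)
    (hw_range : ∀ x ∈ Icc (0:ℝ) 1, w x ∈ Icc (0:ℝ) 1)
    (hv_int : IntegrableOn v (Icc 0 1)) (hv_nonneg : ∀ x, 0 ≤ v x)
    (hvhat_int : IntegrableOn vhat (Icc 0 1)) (hvhat_nonneg : ∀ x, 0 ≤ vhat x)
    (Sstar Shat : Set ℝ)
    (hSstar_meas : MeasurableSet Sstar) (hSstar_sub : Sstar ⊆ Icc 0 1)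
    (hSstar_vol : (volume Sstar).toReal ≤ c)
    (hSstar_max : ∀ S : Set ℝ, MeasurableSet S → S ⊆ Icc 0 1 → (volume S).toReal ≤ c →
      (∫ x in S, v x * w x) / (1 + ∫ x in S, v x) ≤
        (∫ x in Sstar, v x * w x) / (1 + ∫ x in Sstar, v x))
    (hShat_meas : MeasurableSet Shat) (hShat_sub : Shat ⊆ Icc 0 1)
    (hShat_vol : (volume Shat).toReal ≤ c)
    (hShat_max : ∀ S : Set ℝ, MeasurableSet S → S ⊆ Icc 0 1 → (volume S).toReal ≤ c →
      (∫ x in S, vhat x * w x) / (1 + ∫ x in S, vhat x) ≤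
        (∫ x in Shat, vhat x * w x) / (1 + ∫ x in Shat, vhat x)) :
    (∫ x in Sstar, v x * w x) / (1 + ∫ x in Sstar, v x) -
        (∫ x in Shat, v x * w x) / (1 + ∫ x in Shat, v x) ≤
      2 * ∫ x in Icc (0:ℝ) 1, |v x - vhat x| :=
  stmt16_general c w v vhat hw_meas hw_range hv_int hv_nonneg hvhat_int hvhat_nonneg Sstar Shat
    hSstar_meas hSstar_sub hSstar_vol hShat_meas hShat_sub hShat_max
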